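/- Let N, N₂ ∈ ℕ and α := 1/N₂. Let Q be a probability distribution on a finite set of N points in ℝⁿ such that Q(u) is an integer multiple of α for every point u in its support. Let (x, x̂) be jointly distributed, where x ~ Q and x̂ takes values in a countable subset of ℝⁿ, satisfying Pr[ ‖x − x̂‖ ≤ ε ] ≥ 1 − δ. Then for all τ ∈ (0,1): τ(1 − δ) · log cov_{2ε, τ + δ}(Q) ≤ I(x; x̂) + 2. -/

import Mathlib

open MeasureTheory ProbabilityTheory ENNReal
open scoped NNReal

noncomputable section

/-- `ℝⁿ` with the `ℓ₂` norm. -/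
abbrev EucSp (n : ℕ) : Type := EuclideanSpace ℝ (Fin n)

/-- `m × n` real matrices, as functions (so that the product measurable structure is found). -/
abbrev MatR (m n : ℕ) : Type := Fin m → Fin n → ℝ

/-- The `(η, δ)`-approximate covering number of a measure `R` on `ℝⁿ`: the least number of
closed `ℓ₂`-balls of radius `η` whose union has `R`-mass at least `1 - δ`. -/
def covNum {n : ℕ} (R : Measure (EucSp n)) (η δ : ℝ) : ℕ :=
  sInf {k : ℕ | ∃ s : Finset (EucSp n), s.card = k ∧
    ENNReal.ofReal (1 - δ) ≤ R (⋃ x ∈ s, Metric.closedBall x η)}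

/-- `γ` is a coupling of `μ` and `ν`. -/
def IsCoupling {α : Type*} [MeasurableSpace α] (γ : Measure (α × α)) (μ ν : Measure α) : Prop :=
  γ.map Prod.fst = μ ∧ γ.map Prod.snd = ν

/-- Wasserstein-`p` distance. -/
def wassDist {α : Type*} [MeasurableSpace α] [NormedAddCommGroup α]
    (p : ℝ) (μ ν : Measure α) : ℝ≥0∞ :=
  ⨅ γ ∈ {γ : Measure (α × α) | IsCoupling γ μ ν},
    (∫⁻ z, ENNReal.ofReal (‖z.1 - z.2‖ ^ p) ∂γ) ^ (1 / p)

/-- Wasserstein-`∞` distance. -/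
def wassInf {α : Type*} [MeasurableSpace α] [NormedAddCommGroup α]
    (μ ν : Measure α) : ℝ≥0∞ :=
  ⨅ γ ∈ {γ : Measure (α × α) | IsCoupling γ μ ν},
    essSup (fun z => ENNReal.ofReal ‖z.1 - z.2‖) γ

/-- Total variation distance between two measures. -/
def tvDist {α : Type*} [MeasurableSpace α] (μ ν : Measure α) : ℝ :=
  ⨆ s : {s : Set α // MeasurableSet s}, ((μ s.1).toReal - (ν s.1).toReal)

open Classical in
/-- Kullback-Leibler divergence (natural log), `∞` if not absolutely continuous/integrable. -/
def klDivE {α : Type*} [MeasurableSpace α] (μ ν : Measure α) : ℝ≥0∞ :=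
  if μ ≪ ν ∧ Integrable (fun x => Real.log (μ.rnDeriv ν x).toReal) μ
  then ENNReal.ofReal (∫ x, Real.log (μ.rnDeriv ν x).toReal ∂μ) else ⊤

/-- Shannon mutual information (in nats) between the two coordinates of a joint law. -/
def mutualInfoE {α β : Type*} [MeasurableSpace α] [MeasurableSpace β]
    (μ : Measure (α × β)) : ℝ≥0∞ :=
  klDivE μ ((μ.map Prod.fst).prod (μ.map Prod.snd))

/-- Mutual information in bits. -/
def mutualInfoBits {α β : Type*} [MeasurableSpace α] [MeasurableSpace β]
    (μ : Measure (α × β)) : ℝ≥0∞ :=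
  mutualInfoE μ / ENNReal.ofReal (Real.log 2)

/-- Standard product Gaussian `N(0, v I_m)` on `ℝᵐ` (with the `ℓ₂` structure). -/
def gaussianVec (m : ℕ) (v : ℝ≥0) : Measure (EucSp m) :=
  (Measure.pi fun _ : Fin m => gaussianReal 0 v).map
    (⇑(EuclideanSpace.equiv (Fin m) ℝ).symm)

/-- Law of an `m × n` random matrix with i.i.d. `N(0, 1/m)` entries. -/
def gaussMatrix (m n : ℕ) : Measure (MatR m n) :=
  Measure.pi fun _ : Fin m => Measure.pi fun _ : Fin n => gaussianReal 0 ((m : ℝ≥0)⁻¹)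

/-- Apply a matrix to a vector of `ℝⁿ`, landing in `ℝᵐ` (`ℓ₂` structure on both sides). -/
def applyMat {m n : ℕ} (A : MatR m n) (x : EucSp n) : EucSp m :=
  (EuclideanSpace.equiv (Fin m) ℝ).symm
    (fun i => ∑ j, A i j * (EuclideanSpace.equiv (Fin n) ℝ) x j)

/-- Maximum `ℓ₂` norm of a row of `A`. -/
def maxRowNorm {m n : ℕ} (A : MatR m n) : ℝ :=
  ⨆ i : Fin m, Real.sqrt (∑ j, (A i j) ^ 2)

/-- Joint law of `(x⋆, y)` where `x⋆ ∼ P` and `y = A x⋆ + ξ`,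
`ξ ∼ N(0, (σ²/m) I_m)` independent of `x⋆`. -/
def jointXY {m n : ℕ} (P : Measure (EucSp n)) (A : MatR m n)
    (σ : ℝ) : Measure (EucSp n × EucSp m) :=
  (P.prod (gaussianVec m (Real.toNNReal (σ ^ 2 / m)))).map
    (fun p => (p.1, applyMat A p.1 + p.2))

/-- Joint law of `(y, x⋆)`. -/
def jointYX {m n : ℕ} (P : Measure (EucSp n)) (A : MatR m n)
    (σ : ℝ) : Measure (EucSp m × EucSp n) :=
  (jointXY P A σ).map Prod.swap

/-- Law of the observation `y` alone. -/
def obsDist {m n : ℕ} (P : Measure (EucSp n)) (A : MatR m n)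
    (σ : ℝ) : Measure (EucSp m) :=
  (jointXY P A σ).map Prod.snd

/-- `κ` is (a version of) the posterior/conditional distribution of the second coordinate given
the first, for the joint law `ρ`.  Sampling from `κ y` is posterior sampling. -/
def IsPosterior {α β : Type*} [MeasurableSpace α] [MeasurableSpace β]
    (ρ : Measure (α × β)) (κ : Kernel α β) : Prop :=
  IsMarkovKernel κ ∧ ∀ s t : Set _, MeasurableSet s → MeasurableSet t →
    ρ (s ×ˢ t) = ∫⁻ y in s, κ y t ∂(ρ.map Prod.fst)


/-! Greedily pick `K = cov - 1` balls of radius `2ε` around support points, each time the one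
capturing the most new mass. They cover less than `1 - (τ + δ)`, and since the captured
increments decrease, every `2ε`-ball around a support point keeps at most `1/K` of uncovered
mass. Let `A` be the event that `x` is uncovered and `‖x - x̂‖ ≤ ε`. Under the joint law `A` has
mass at least `τ`; under the product of the marginals at most `1/K`, because the `ε`-ball around
`x̂` lies in the `2ε`-ball around a support point. Data processing onto the partition `{A, Aᶜ}`
then gives `I(x; x̂) ≥ τ log K - log 2`. -/

open InformationTheory Metric

section Greedy

variable {α ι : Type*} [MeasurableSpace α] [DecidableEq ι]

theorem exists_finset_card_le_forall_mul_measure_diff_le (Q : Measure α) {B : ι → Set α}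
    (hB : ∀ i, MeasurableSet (B i)) (S : Finset ι) (K : ℕ) :
    ∃ T : Finset ι, T.card ≤ K ∧
      ∀ i ∈ S, K * Q (B i \ ⋃ j ∈ T, B j) ≤ Q (⋃ j ∈ T, B j) := by
  induction K with
  | zero => exact ⟨∅, by simp, by simp⟩
  | succ K ih =>
    obtain ⟨T, hTcard, hT⟩ := ih
    rcases S.eq_empty_or_nonempty with rfl | hS
    · exact ⟨T, hTcard.trans K.le_succ, by simp⟩
    obtain ⟨k, hkS, hk⟩ := S.exists_max_image (fun i => Q (B i \ ⋃ j ∈ T, B j)) hS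
    refine ⟨insert k T, (Finset.card_insert_le k T).trans (by omega), fun i hi => ?_⟩
    have hunion : ⋃ j ∈ insert k T, B j = (⋃ j ∈ T, B j) ∪ B k := by
      rw [Finset.set_biUnion_insert, Set.union_comm]
    have hnew : Q (⋃ j ∈ insert k T, B j) = Q (⋃ j ∈ T, B j) + Q (B k \ ⋃ j ∈ T, B j) := by
      rw [hunion, ← Set.union_sdiff_self,
        measure_union Set.disjoint_sdiff_right
          ((hB k).diff (T.measurableSet_biUnion fun j _ => hB j))]
    have hmono : Q (B i \ ⋃ j ∈ insert k T, B j) ≤ Q (B i \ ⋃ j ∈ T, B j) :=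
      measure_mono (Set.sdiff_subset_sdiff_right (hunion ▸ Set.subset_union_left))
    calc ((K + 1 : ℕ) : ℝ≥0∞) * Q (B i \ ⋃ j ∈ insert k T, B j)
        = K * Q (B i \ ⋃ j ∈ insert k T, B j) + Q (B i \ ⋃ j ∈ insert k T, B j) := by
          push_cast; ring
      _ ≤ Q (⋃ j ∈ T, B j) + Q (B k \ ⋃ j ∈ T, B j) :=
          add_le_add ((mul_le_mul_right hmono _).trans (hT i hi)) (hmono.trans (hk i hi))
      _ = Q (⋃ j ∈ insert k T, B j) := hnew.symm

end Greedy

theorem measure_biUnion_closedBall_lt_of_card_lt_covNum {n : ℕ} {R : Measure (EucSp n)}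
    {η δ : ℝ} {s : Finset (EucSp n)} (hs : s.card < covNum R η δ) :
    R (⋃ x ∈ s, closedBall x η) < ENNReal.ofReal (1 - δ) := by
  by_contra! h
  exact (Nat.sInf_le ⟨s, rfl, h⟩ : covNum R η δ ≤ s.card).not_gt hs

theorem measure_closedBall_diff_le_of_forall_mem {X : Type*} [PseudoMetricSpace X]
    [MeasurableSpace X] {Q : Measure X} {S : Finset X} (hQS : Q (↑S)ᶜ = 0) {C : Set X}
    {ε : ℝ} {c : ℝ≥0∞} (hc : ∀ u ∈ S, Q (closedBall u (2 * ε) \ C) ≤ c) (y : X) :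
    Q (closedBall y ε \ C) ≤ c := by
  by_cases hy : ∃ u ∈ S, dist u y ≤ ε
  · obtain ⟨u, huS, huy⟩ := hy
    refine (measure_mono (Set.sdiff_subset_sdiff_left fun x hx => ?_)).trans (hc u huS)
    rw [mem_closedBall] at hx ⊢
    linarith [dist_triangle_right x u y]
  · push Not at hy
    refine (measure_mono fun x hx hxS => ?_).trans (hQS.trans_le zero_le)
    exact (hy x hxS).not_ge hx.1

theorem MeasureTheory.Measure.prod_apply_le_of_forall_preimage_le {α β : Type*} [MeasurableSpace α]
    [MeasurableSpace β] (Q : Measure α) [SFinite Q] (r : Measure β) [IsProbabilityMeasure r]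
    {s : Set (α × β)} (hs : MeasurableSet s) {c : ℝ≥0∞}
    (h : ∀ y, Q ((fun x => (x, y)) ⁻¹' s) ≤ c) : Q.prod r s ≤ c := by
  rw [Measure.prod_apply_symm hs]
  exact (lintegral_mono h).trans (by simp)

section GoodEvent

variable {E : Type*} [SeminormedAddCommGroup E] [MeasurableSpace E] [BorelSpace E]
  [SecondCountableTopology E]

theorem measurableSet_norm_sub_le (ε : ℝ) :
    MeasurableSet {q : E × E | ‖q.1 - q.2‖ ≤ ε} :=
  measurableSet_le (by fun_prop) measurable_const

theorem prod_apply_norm_sub_le_sdiff_le {Q : Measure E} [SFinite Q] {S : Finset E}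
    (hQS : Q (↑S)ᶜ = 0) (r : Measure E) [IsProbabilityMeasure r] {C : Set E}
    (hC : MeasurableSet C) {ε : ℝ} {c : ℝ≥0∞}
    (hc : ∀ u ∈ S, Q (closedBall u (2 * ε) \ C) ≤ c) :
    Q.prod r ({q | ‖q.1 - q.2‖ ≤ ε} \ Prod.fst ⁻¹' C) ≤ c :=
  Measure.prod_apply_le_of_forall_preimage_le Q r
    ((measurableSet_norm_sub_le ε).diff (hC.preimage measurable_fst))
    fun y => by
      convert measure_closedBall_diff_le_of_forall_mem hQS hc y using 2
      ext x
      simp [dist_eq_norm]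

end GoodEvent

theorem exists_measure_lt_forall_mul_measure_closedBall_diff_le {n : ℕ}
    (Q : Measure (EucSp n)) (S : Finset (EucSp n)) {η δ : ℝ} {K : ℕ}
    (hK : K < covNum Q η δ) :
    ∃ C : Set (EucSp n), MeasurableSet C ∧ Q C < ENNReal.ofReal (1 - δ) ∧
      ∀ u ∈ S, K * Q (closedBall u η \ C) ≤ Q C := by
  obtain ⟨T, hTcard, hT⟩ := exists_finset_card_le_forall_mul_measure_diff_le Q
    (fun _ => measurableSet_closedBall) S K
  exact ⟨_, T.measurableSet_biUnion fun _ _ => measurableSet_closedBall,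
    measure_biUnion_closedBall_lt_of_card_lt_covNum (hTcard.trans_lt hK), hT⟩

theorem exists_measure_lt_prod_real_norm_sub_le_sdiff_le {n : ℕ} {Q : Measure (EucSp n)}
    [IsProbabilityMeasure Q] {S : Finset (EucSp n)} (hQS : Q (↑S)ᶜ = 0)
    (r : Measure (EucSp n)) [IsProbabilityMeasure r] {ε δ : ℝ} {K : ℕ} (hK0 : 0 < K)
    (hK : K < covNum Q (2 * ε) δ) :
    ∃ C : Set (EucSp n), MeasurableSet C ∧ Q C < ENNReal.ofReal (1 - δ) ∧
      (Q.prod r).real ({q | ‖q.1 - q.2‖ ≤ ε} \ Prod.fst ⁻¹' C) ≤ (K : ℝ)⁻¹ := by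
  obtain ⟨C, hC, hQC, hfresh⟩ :=
    exists_measure_lt_forall_mul_measure_closedBall_diff_le Q S hK
  refine ⟨C, hC, hQC, ENNReal.toReal_le_of_le_ofReal (by positivity)
    (prod_apply_norm_sub_le_sdiff_le hQS r hC fun u hu => ?_)⟩
  rw [ENNReal.ofReal_inv_of_pos (by exact_mod_cast hK0), ENNReal.ofReal_natCast,
    ENNReal.le_inv_iff_mul_le, mul_comm]
  exact (hfresh u hu).trans prob_le_one

section KullbackLeibler

variable {α : Type*} [MeasurableSpace α] {μ ν : Measure α} {s : Set α}

theorem klDivE_eq_klDiv (μ ν : Measure α)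
    [IsProbabilityMeasure μ] [IsProbabilityMeasure ν] : klDivE μ ν = klDiv μ ν := by
  rw [klDivE, ← llr_def]
  by_cases h : μ ≪ ν ∧ Integrable (llr μ ν) μ
  · rw [if_pos h, klDiv_of_ac_of_integrable h.1 h.2]
    simp
  · rw [if_neg h]
    rcases not_and_or.mp h with h | h
    · exact (klDiv_of_not_ac h).symm
    · exact (klDiv_of_not_integrable h).symm

theorem MeasureTheory.Measure.rnDeriv_restrict_restrict_ae_eq [SigmaFinite ν]
    [μ.HaveLebesgueDecomposition ν] (hμν : μ ≪ ν) (hs : MeasurableSet s) :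
    (μ.restrict s).rnDeriv (ν.restrict s) =ᵐ[ν.restrict s] μ.rnDeriv ν := by
  have h : (ν.restrict s).withDensity (μ.rnDeriv ν) = μ.restrict s := by
    rw [← restrict_withDensity hs, Measure.withDensity_rnDeriv_eq μ ν hμν]
  exact h ▸ Measure.rnDeriv_withDensity _ (Measure.measurable_rnDeriv μ ν)

theorem mul_log_div_le_setIntegral_llr [IsFiniteMeasure μ] [IsFiniteMeasure ν]
    (hμν : μ ≪ ν) (hint : Integrable (llr μ ν) μ) (hs : MeasurableSet s) :
    μ.real s * Real.log (μ.real s / ν.real s) ≤ ∫ x in s, llr μ ν x ∂μ := by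
  have hllr : llr (μ.restrict s) (ν.restrict s) =ᵐ[μ.restrict s] llr μ ν :=
    ((hμν.restrict s).ae_eq (Measure.rnDeriv_restrict_restrict_ae_eq hμν hs)).mono
      fun x hx => by simp only [llr, hx]
  have hint' : Integrable (llr (μ.restrict s) (ν.restrict s)) (μ.restrict s) :=
    hint.restrict.congr hllr.symm
  have h := mul_log_le_toReal_klDiv (hμν.restrict s) hint'
  rw [toReal_klDiv (hμν.restrict s) hint', integral_congr_ae hllr] at h
  simp only [measureReal_restrict_apply_univ] at h
  linarith

theorem mul_log_inv_sub_log_two_le_integral_llr [IsProbabilityMeasure μ]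
    [IsProbabilityMeasure ν] (hμν : μ ≪ ν) (hint : Integrable (llr μ ν) μ)
    (hs : MeasurableSet s) :
    μ.real s * Real.log (ν.real s)⁻¹ - Real.log 2 ≤ ∫ x, llr μ ν x ∂μ := by
  have hA := mul_log_div_le_setIntegral_llr hμν hint hs
  have hAc := mul_log_div_le_setIntegral_llr hμν hint hs.compl
  rw [probReal_compl_eq_one_sub hs, probReal_compl_eq_one_sub hs] at hAc
  have hsplit := integral_add_compl hs hint
  have hac : ∀ {t : Set α}, μ.real t ≠ 0 → ν.real t ≠ 0 := fun {t} h hν =>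
    h ((measureReal_eq_zero_iff).mpr (hμν ((measureReal_eq_zero_iff).mp hν)))
  have hin : μ.real s * Real.log (μ.real s / ν.real s)
      = μ.real s * Real.log (μ.real s) + μ.real s * Real.log (ν.real s)⁻¹ := by
    rcases eq_or_ne (μ.real s) 0 with ha | ha
    · simp [ha]
    rw [div_eq_mul_inv, Real.log_mul ha (inv_ne_zero (hac ha)), mul_add]
  have hout : (1 - μ.real s) * Real.log (1 - μ.real s)
      ≤ (1 - μ.real s) * Real.log ((1 - μ.real s) / (1 - ν.real s)) := by
    rcases eq_or_ne (1 - μ.real s) 0 with ha | ha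
    · rw [ha, zero_mul, zero_mul]
    have ha' : 0 < 1 - μ.real s := lt_of_le_of_ne (by simp) ha.symm
    have hb : 0 < 1 - ν.real s := by
      refine lt_of_le_of_ne (by simp) (Ne.symm ?_)
      rw [← probReal_compl_eq_one_sub hs] at ha ⊢
      exact hac ha
    gcongr
    exact le_div_self ha'.le hb (by simp)
  have hent := Real.binEntropy_le_log_two (p := μ.real s)
  rw [Real.binEntropy, Real.log_inv, Real.log_inv] at hent
  linarith

theorem ofReal_mul_logb_sub_one_le_klDiv_div_log_two [IsProbabilityMeasure μ]
    [IsProbabilityMeasure ν] (hs : MeasurableSet s) {τ K : ℝ} (hτ : 0 ≤ τ) (hK : 1 ≤ K)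
    (hμs : τ ≤ μ.real s) (hνs : ν.real s ≤ K⁻¹) :
    ENNReal.ofReal (τ * Real.logb 2 K - 1) ≤ klDiv μ ν / ENNReal.ofReal (Real.log 2) := by
  by_cases h : μ ≪ ν ∧ Integrable (llr μ ν) μ
  swap
  · rw [klDiv_eq_top_iff.mpr fun hac hint => h ⟨hac, hint⟩,
      ENNReal.top_div_of_ne_top ENNReal.ofReal_ne_top]
    exact le_top
  have hlog2 : 0 < Real.log 2 := Real.log_pos one_lt_two
  rw [← ENNReal.ofReal_toReal (klDiv_ne_top h.1 h.2), toReal_klDiv h.1 h.2,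
    ← ENNReal.ofReal_div_of_pos hlog2]
  refine ENNReal.ofReal_le_ofReal ?_
  have hgibbs := mul_log_inv_sub_log_two_le_integral_llr h.1 h.2 hs
  have hK' : τ * Real.log K ≤ μ.real s * Real.log (ν.real s)⁻¹ := by
    rcases eq_or_ne (ν.real s) 0 with hb | hb
    · have ha : μ.real s = 0 :=
        (measureReal_eq_zero_iff).mpr (h.1 ((measureReal_eq_zero_iff).mp hb))
      simp [ha, le_antisymm (hμs.trans ha.le) hτ]
    have hlogK : Real.log K ≤ Real.log (ν.real s)⁻¹ :=
      Real.log_le_log (by linarith)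
        ((le_inv_comm₀ (measureReal_nonneg.lt_of_ne' hb) (by linarith)).mp hνs)
    exact mul_le_mul hμs hlogK (Real.log_nonneg hK) (hτ.trans hμs)
  have hbits : (τ * Real.logb 2 K - 1) * Real.log 2 = τ * Real.log K - Real.log 2 := by
    rw [Real.logb]
    field_simp
  rw [le_div_iff₀ hlog2, hbits, probReal_univ, probReal_univ]
  linarith

end KullbackLeibler

theorem sub_lt_measureReal_sdiff_preimage_fst {X Y : Type*} [MeasurableSpace X]
    [MeasurableSpace Y] {μ : Measure (X × Y)} [IsFiniteMeasure μ] {G : Set (X × Y)} {C : Set X}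
    (hC : MeasurableSet C) {p q : ℝ}
    (hG : ENNReal.ofReal p ≤ μ G) (hCq : μ.map Prod.fst C < ENNReal.ofReal q) :
    p - q < μ.real (G \ Prod.fst ⁻¹' C) := by
  have hp : p ≤ μ.real G := (ENNReal.ofReal_le_iff_le_toReal (measure_ne_top _ _)).mp hG
  have hq : μ.real (Prod.fst ⁻¹' C) < q := by
    rw [measureReal_def, ← Measure.map_apply measurable_fst hC]
    exact ENNReal.toReal_lt_of_lt_ofReal hCq
  linarith [le_measureReal_sdiff (μ := μ) (s₁ := G) (s₂ := Prod.fst ⁻¹' C)]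

theorem mul_logb_two_add_one_le {τ δ x : ℝ} (hτ0 : 0 ≤ τ) (hτ1 : τ ≤ 1) (hδ : 0 ≤ δ)
    (hx : 1 ≤ x) : τ * (1 - δ) * Real.logb 2 (x + 1) ≤ (τ * Real.logb 2 x - 1) + 2 := by
  have hdouble : Real.logb 2 (x + 1) ≤ Real.logb 2 x + 1 := by
    calc Real.logb 2 (x + 1) ≤ Real.logb 2 (2 * x) :=
          Real.logb_le_logb_of_le one_lt_two (by linarith) (by linarith)
      _ = Real.logb 2 x + 1 := by
          rw [Real.logb_mul two_ne_zero (by linarith), Real.logb_self_eq_one one_lt_two,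
            add_comm]
  have hlog0 : 0 ≤ Real.logb 2 (x + 1) := Real.logb_nonneg one_lt_two (by linarith)
  nlinarith [mul_le_mul_of_nonneg_left hdouble hτ0, mul_nonneg (mul_nonneg hτ0 hδ) hlog0]

theorem covering_nonuniform_general (n : ℕ)
    (S : Finset (EucSp n))
    (Q : Measure (EucSp n)) (hQprob : IsProbabilityMeasure Q)
    (hQsupp : Q (↑S)ᶜ = 0)
    (μ : Measure (EucSp n × EucSp n)) (hμ : IsProbabilityMeasure μ)
    (hmarg : μ.map Prod.fst = Q)
    (ε δ : ℝ)
    (herr : ENNReal.ofReal (1 - δ) ≤ μ {q | ‖q.1 - q.2‖ ≤ ε}) :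
    ∀ τ : ℝ, 0 < τ → τ < 1 →
      ENNReal.ofReal (τ * (1 - δ) * Real.logb 2 (covNum Q (2 * ε) (τ + δ)))
        ≤ mutualInfoBits μ + ENNReal.ofReal 2 := by
  intro τ hτ0 hτ1
  rcases le_or_gt (covNum Q (2 * ε) (τ + δ)) 1 with ht | ht
  · -- `Real.logb 2 0 = 0`, so both `covNum = 0` and `covNum = 1` make the left side vanish
    have hlog : Real.logb 2 (covNum Q (2 * ε) (τ + δ)) = 0 := by
      interval_cases covNum Q (2 * ε) (τ + δ) <;> simp
    simp [hlog]
  obtain ⟨K, htK⟩ : ∃ K : ℕ, covNum Q (2 * ε) (τ + δ) = K + 1 :=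
    ⟨_, (Nat.sub_add_cancel ht.le).symm⟩
  have := Measure.isProbabilityMeasure_map (μ := μ) measurable_snd.aemeasurable
  obtain ⟨C, hC, hQC, hνA⟩ :=
    exists_measure_lt_prod_real_norm_sub_le_sdiff_le hQsupp (μ.map Prod.snd) (by omega)
      (by omega : K < covNum Q (2 * ε) (τ + δ))
  have hμA := sub_lt_measureReal_sdiff_preimage_fst hC herr (hmarg ▸ hQC)
  have hK : (1 : ℝ) ≤ K := by exact_mod_cast (by omega : 1 ≤ K)
  have hbits := ofReal_mul_logb_sub_one_le_klDiv_div_log_two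
    ((measurableSet_norm_sub_le ε).diff (hC.preimage measurable_fst)) hτ0.le hK
    (by linarith) hνA
  have hδ : 0 ≤ δ := by linarith [ENNReal.ofReal_le_one.mp (herr.trans prob_le_one)]
  rw [mutualInfoBits, mutualInfoE, hmarg, klDivE_eq_klDiv, htK, Nat.cast_succ]
  calc ENNReal.ofReal (τ * (1 - δ) * Real.logb 2 (K + 1))
      ≤ ENNReal.ofReal ((τ * Real.logb 2 K - 1) + 2) :=
        ENNReal.ofReal_le_ofReal (mul_logb_two_add_one_le hτ0.le hτ1.le hδ hK)
    _ ≤ _ := ENNReal.ofReal_add_le.trans (by gcongr)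

/-- **Fano-type covering bound, quantized case** (`lemma: covering nonuniform`).
`x ∼ Q`, a distribution on `N` points whose probabilities are integer multiples of
`α = 1/N₂`; `x̂` takes countably many values, and `Pr[‖x - x̂‖ ≤ ε] ≥ 1 - δ`.  Then for all
`τ ∈ (0,1)`:  `τ (1-δ) log cov_{2ε, τ+δ}(Q) ≤ I(x; x̂) + 2` (information in bits). -/
theorem covering_nonuniform (n N N₂ : ℕ) (hN₂ : 0 < N₂)
    (S : Finset (EucSp n)) (hcard : S.card = N)
    (Q : Measure (EucSp n)) (hQprob : IsProbabilityMeasure Q)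
    (hQsupp : Q (↑S)ᶜ = 0)
    (hquant : ∀ u ∈ S, ∃ j : ℕ, Q {u} = (j : ℝ≥0∞) / (N₂ : ℝ≥0∞))
    (μ : Measure (EucSp n × EucSp n)) (hμ : IsProbabilityMeasure μ)
    (hmarg : μ.map Prod.fst = Q)
    (D : Set (EucSp n)) (hD : D.Countable) (hsupp : (μ.map Prod.snd) Dᶜ = 0)
    (ε δ : ℝ)
    (herr : ENNReal.ofReal (1 - δ) ≤ μ {q | ‖q.1 - q.2‖ ≤ ε}) :
    ∀ τ : ℝ, 0 < τ → τ < 1 →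
      ENNReal.ofReal (τ * (1 - δ) * Real.logb 2 (covNum Q (2 * ε) (τ + δ)))
        ≤ mutualInfoBits μ + ENNReal.ofReal 2 :=
  covering_nonuniform_general n S Q hQprob hQsupp μ hμ hmarg ε δ herr

end
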